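/- arXiv:math/0606651 — 6 statements merged into one kernel-verified Lean document; each statement's English description precedes it below -/
import Mathlib

section
/- Let A ⊆ X be a subspace with inclusion ι, and let Λ_A be a ℤᵗ-system on A. Suppose there exists a ℤᵗ-system Λ' on X such that Λ'(ι∘L) = Λ_A(L) for every loop L in A (i.e. the twist of Λ_A extends over X). Then there exists a ℤᵗ-system Λ_X on X such that Λ_X(ι∘λ) = Λ_A(λ) for every path λ in A, and Λ_X(L) = Λ'(L) for every loop L in X (i.e. Λ_X restricts to Λ_A and has the prescribed twist). -/
open unitInterval

/-- A `ℤᵗ`-system on a topological space `X`: a functor from the fundamental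
groupoid of `X` to the group `{1,-1} = ℤˣ`. -/
structure ZtSystem (X : Type*) [TopologicalSpace X] where
  val : ∀ {x y : X}, Path x y → ℤˣ
  homotopic_eq : ∀ {x y : X} {γ γ' : Path x y}, Path.Homotopic γ γ' → val γ = val γ'
  refl_eq : ∀ x : X, val (Path.refl x) = 1
  trans_eq : ∀ {x y z : X} (γ : Path x y) (δ : Path y z), val (γ.trans δ) = val γ * val δ

/-- A morphism `ζ : Λ₀ → Λ₁` of `ℤᵗ`-systems on `X`. -/
def ZtSystem.IsMorphism {X : Type*} [TopologicalSpace X] (Λ₀ Λ₁ : ZtSystem X)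
    (ζ : X → ℤˣ) : Prop :=
  ∀ {x y : X} (γ : Path x y), Λ₀.val γ * Λ₁.val γ = ζ x * ζ y

/-- Pullback of a `ℤᵗ`-system along a continuous map. -/
def ZtSystem.pullback {X Y : Type*} [TopologicalSpace X] [TopologicalSpace Y]
    (f : C(X, Y)) (Λ : ZtSystem Y) : ZtSystem X where
  val γ := Λ.val (γ.map f.continuous)
  homotopic_eq h := Λ.homotopic_eq (h.map f)
  refl_eq x := by
    show Λ.val ((Path.refl x).map f.continuous) = 1
    rw [show (Path.refl x).map f.continuous = Path.refl (f x) from Path.ext rfl]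
    exact Λ.refl_eq _
  trans_eq γ δ := by
    show Λ.val ((γ.trans δ).map f.continuous) = _
    rw [Path.map_trans]
    exact Λ.trans_eq _ _



section Aux

variable {Y : Type*} [TopologicalSpace Y]

lemma ZtSystem.symm_val (Λ : ZtSystem Y) {x y : Y} (γ : Path x y) :
    Λ.val γ.symm = Λ.val γ := by
  have h1 : Λ.val γ * Λ.val γ.symm = 1 := by
    rw [← Λ.trans_eq, ← Λ.refl_eq x]
    exact (Λ.homotopic_eq ⟨Path.Homotopy.reflTransSymm γ⟩).symm
  have h2 : Λ.val γ * Λ.val γ = 1 := Int.units_mul_self _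
  exact mul_left_cancel (h1.trans h2.symm)

lemma ZtSystem.val_cast (Λ : ZtSystem Y) {x y x' y' : Y} (γ : Path x y)
    (hx : x' = x) (hy : y' = y) : Λ.val (γ.cast hx hy) = Λ.val γ := by
  subst hx; subst hy
  exact congrArg _ (Path.ext rfl)

lemma path_cast_map {Z : Type*} [TopologicalSpace Z] {f : Y → Z} (hf : Continuous f)
    {x y x' y' : Y} (γ : Path x y) (hx : x' = x) (hy : y' = y) :
    (γ.cast hx hy).map hf = (γ.map hf).cast (congrArg f hx) (congrArg f hy) := by
  subst hx; subst hy
  exact Path.ext rfl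

/-- Pick a representative of the path component of a point. -/
noncomputable def myRep (a : Y) : Y := (@Quotient.mk _ (pathSetoid Y) a).out

lemma myRep_joined (a : Y) : Joined (myRep a) a :=
  @Quotient.exact _ (pathSetoid Y) _ _ (Quotient.out_eq _)

/-- A chosen path from the representative to the point. -/
noncomputable def myPath (a : Y) : Path (myRep a) a := (myRep_joined a).somePath

lemma myRep_eq {a b : Y} (h : Joined a b) : myRep a = myRep b := by
  unfold myRep
  exact congrArg _ (Quotient.sound h)

lemma zt_units_u3 (u v : ℤˣ) : u * v * u = v := by
  rcases Int.units_eq_one_or u with h | h <;>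
  rcases Int.units_eq_one_or v with h' | h' <;> subst h h' <;> decide

lemma zt_units_u5 (p q y a b : ℤˣ) : p * (a * b) * q = (p * a * y) * (y * b * q) := by
  rcases Int.units_eq_one_or p with h0 | h0 <;>
  rcases Int.units_eq_one_or q with h1 | h1 <;>
  rcases Int.units_eq_one_or y with h2 | h2 <;>
  rcases Int.units_eq_one_or a with h3 | h3 <;>
  rcases Int.units_eq_one_or b with h4 | h4 <;>
  subst h0 h1 h2 h3 h4 <;> decide

/-- The twisted extension system. -/
noncomputable def extSystem (Λ' : ZtSystem Y) (ζ : Y → ℤˣ) : ZtSystem Y where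
  val {x y} γ := ζ x * Λ'.val γ * ζ y
  homotopic_eq {x y γ γ'} h := by
    show ζ x * Λ'.val γ * ζ y = ζ x * Λ'.val γ' * ζ y
    rw [Λ'.homotopic_eq h]
  refl_eq x := by
    show ζ x * Λ'.val (Path.refl x) * ζ x = 1
    rw [Λ'.refl_eq]
    exact zt_units_u3 _ _
  trans_eq {x y z} γ δ := by
    show ζ x * Λ'.val (γ.trans δ) * ζ z = (ζ x * Λ'.val γ * ζ y) * (ζ y * Λ'.val δ * ζ z)
    rw [Λ'.trans_eq]
    exact zt_units_u5 _ _ _ _ _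

lemma zt_units_key {a₀ aγ a₁ b₀ bγ b₁ : ℤˣ} (h : b₀ * (bγ * b₁) = a₀ * (aγ * a₁)) :
    (a₀ * b₀) * bγ * (a₁ * b₁) = aγ := by
  rcases Int.units_eq_one_or a₀ with h0 | h0 <;>
  rcases Int.units_eq_one_or aγ with h1 | h1 <;>
  rcases Int.units_eq_one_or a₁ with h2 | h2 <;>
  rcases Int.units_eq_one_or b₀ with h3 | h3 <;>
  rcases Int.units_eq_one_or bγ with h4 | h4 <;>
  rcases Int.units_eq_one_or b₁ with h5 | h5 <;>
  subst h0 h1 h2 h3 h4 h5 <;> revert h <;> decide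

end Aux

/-- If the twist of a `ℤᵗ`-system `Λ_A` on a subspace `A ⊆ X` extends over `X`
(witnessed by `Λ'`), then `Λ_A` itself extends to a `ℤᵗ`-system on `X` with the
prescribed twist. -/
theorem extend_system {X : Type*} [TopologicalSpace X] (A : Set X)
    (lamA : ZtSystem A) (Λ' : ZtSystem X)
    (hext : ∀ (a : A) (L : Path a a),
      Λ'.val (L.map continuous_subtype_val) = lamA.val L) :
    ∃ lamX : ZtSystem X,
      (∀ (a₀ a₁ : A) (γ : Path a₀ a₁),
        lamX.val (γ.map continuous_subtype_val) = lamA.val γ) ∧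
      (∀ (x : X) (L : Path x x), lamX.val L = Λ'.val L) := by
  classical
  set ι := (continuous_subtype_val : Continuous ((↑) : A → X)) with hι
  set d : A → ℤˣ := fun a => lamA.val (myPath a) * Λ'.val ((myPath a).map ι) with hd
  set ζ : X → ℤˣ := fun x => if h : x ∈ A then d ⟨x, h⟩ else 1 with hζ
  have hζA : ∀ a : A, ζ (a : X) = d a := by
    intro a
    simp only [hζ, dif_pos a.2]
  -- key computation
  have key : ∀ (a₀ a₁ : A) (γ : Path a₀ a₁),
      d a₀ * (Λ'.val (γ.map ι)) * d a₁ = lamA.val γ := by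
    intro a₀ a₁ γ
    have hrep : myRep a₀ = myRep a₁ := myRep_eq ⟨γ⟩
    set μ₀ : Path (myRep a₀) a₀ := myPath a₀ with hμ₀
    set μ₁ : Path (myRep a₀) a₁ := (myPath a₁).cast hrep rfl with hμ₁
    have hd1 : d a₁ = lamA.val μ₁ * Λ'.val (μ₁.map ι) := by
      rw [hd, hμ₁, lamA.val_cast, path_cast_map, Λ'.val_cast]
    have h := hext (myRep a₀) (μ₀.trans (γ.trans μ₁.symm))
    rw [Path.map_trans, Path.map_trans, ← Path.map_symm] at h
    rw [Λ'.trans_eq, Λ'.trans_eq, Λ'.symm_val, lamA.trans_eq, lamA.trans_eq,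
      lamA.symm_val] at h
    rw [show d a₀ = lamA.val μ₀ * Λ'.val (μ₀.map ι) from rfl, hd1]
    exact zt_units_key h
  refine ⟨extSystem Λ' ζ, ?_, ?_⟩
  · intro a₀ a₁ γ
    show ζ (a₀ : X) * Λ'.val (γ.map ι) * ζ (a₁ : X) = lamA.val γ
    rw [hζA, hζA]
    exact key a₀ a₁ γ
  · intro x L
    show ζ x * Λ'.val L * ζ x = Λ'.val L
    exact zt_units_u3 _ _
end

section
/- Let ι : A ⊆ X be a subspace inclusion and let Λ₀, Λ₁ be ℤᵗ-systems on X with the same twist (Λ₀(L) = Λ₁(L) for every loop L in X), and let ζ_A : ι*(Λ₀) → ι*(Λ₁) be a morphism of ℤᵗ-systems on A. Pick base points {a_i}, one in each path component of A; for each path component of X that contains a point of A, choose its base point b to be one of the a_i lying in it; and for each i choose a path λ_i in X from a_i to the chosen base point b of the path component of X containing a_i. If for each i one has Λ₀(λ_i)·Λ₁(λ_i) = ζ_A(λ_i(0))·ζ_A(λ_i(1)) (note both endpoints of λ_i lie in A), then there exists a morphism ζ_X : Λ₀ → Λ₁ on X with ζ_X(a) = ζ_A(a) for all a ∈ A. 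-/
open unitInterval

section Aux

variable {X : Type*} [TopologicalSpace X] (Λ₀ Λ₁ : ZtSystem X)

/-- The "discrepancy" of a path. -/
def ZtSystem.w {x y : X} (γ : Path x y) : ℤˣ := Λ₀.val γ * Λ₁.val γ

lemma ZtSystem.w_trans {x y z : X} (γ : Path x y) (δ : Path y z) :
    ZtSystem.w Λ₀ Λ₁ (γ.trans δ) = ZtSystem.w Λ₀ Λ₁ γ * ZtSystem.w Λ₀ Λ₁ δ := by
  simp only [ZtSystem.w, Λ₀.trans_eq, Λ₁.trans_eq]
  exact mul_mul_mul_comm _ _ _ _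


lemma ZtSystem.w_loop {Λ₀ Λ₁ : ZtSystem X} (htwist : ∀ (x : X) (L : Path x x), Λ₀.val L = Λ₁.val L) {x : X} (L : Path x x) : ZtSystem.w Λ₀ Λ₁ L = 1 := by
  simp only [ZtSystem.w, htwist x L]
  exact Int.units_mul_self _

lemma ZtSystem.w_indep (htwist : ∀ (x : X) (L : Path x x), Λ₀.val L = Λ₁.val L) {x y : X} (p q : Path x y) :
    ZtSystem.w Λ₀ Λ₁ p = ZtSystem.w Λ₀ Λ₁ q := by
  have h1 : ZtSystem.w Λ₀ Λ₁ p * ZtSystem.w Λ₀ Λ₁ q.symm = 1 := by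
    rw [← ZtSystem.w_trans]; exact ZtSystem.w_loop htwist _
  have h2 : ZtSystem.w Λ₀ Λ₁ q * ZtSystem.w Λ₀ Λ₁ q.symm = 1 := by
    rw [← ZtSystem.w_trans]; exact ZtSystem.w_loop htwist _
  exact mul_right_cancel (h1.trans h2.symm)

lemma ZtSystem.w_symm (htwist : ∀ (x : X) (L : Path x x), Λ₀.val L = Λ₁.val L) {x y : X} (p : Path x y) :
    ZtSystem.w Λ₀ Λ₁ p.symm = ZtSystem.w Λ₀ Λ₁ p := by
  have h1 : ZtSystem.w Λ₀ Λ₁ p * ZtSystem.w Λ₀ Λ₁ p.symm = 1 := by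
    rw [← ZtSystem.w_trans]; exact ZtSystem.w_loop htwist _
  have h2 : ZtSystem.w Λ₀ Λ₁ p * ZtSystem.w Λ₀ Λ₁ p = 1 := Int.units_mul_self _
  exact mul_left_cancel (h1.trans h2.symm)

lemma units_int_helper : ∀ a b c : ℤˣ, a * (b * c) = 1 → b = a * c := by decide

lemma units_int_helper2 : ∀ p q r : ℤˣ, (p * q) * (q * r) * r = p := by decide

lemma ZtSystem.w_key (htwist : ∀ (x : X) (L : Path x x), Λ₀.val L = Λ₁.val L) {x y b : X} (γ : Path x y) (p : Path x b) (q : Path y b) :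
    ZtSystem.w Λ₀ Λ₁ γ = ZtSystem.w Λ₀ Λ₁ p * ZtSystem.w Λ₀ Λ₁ q := by
  have hL : ZtSystem.w Λ₀ Λ₁ (p.symm.trans (γ.trans q)) = 1 :=
    ZtSystem.w_loop htwist _
  rw [ZtSystem.w_trans, ZtSystem.w_trans, ZtSystem.w_symm Λ₀ Λ₁ htwist] at hL
  exact units_int_helper _ _ _ hL

lemma ZtSystem.w_cast (htwist : ∀ (x : X) (L : Path x x), Λ₀.val L = Λ₁.val L) {x b b' : X} (h : b = b') (hx : Joined x b) (hx' : Joined x b') :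
    ZtSystem.w Λ₀ Λ₁ hx.somePath = ZtSystem.w Λ₀ Λ₁ hx'.somePath := by
  subst h; exact ZtSystem.w_indep Λ₀ Λ₁ htwist _ _

end Aux

/-- If `Λ₀, Λ₁` on `X` have the same twist and a morphism `ζ_A` between their
restrictions to `A` is compatible with chosen paths `λ_i` from the base points
`a i` of `A` to the chosen base points `a (sel i)` of the components of `X`
meeting `A`, then `ζ_A` extends over `X`. -/
theorem extend_morphism_of_compatible_paths {X : Type*} [TopologicalSpace X]
    (A : Set X) (Λ₀ Λ₁ : ZtSystem X)
    (htwist : ∀ (x : X) (L : Path x x), Λ₀.val L = Λ₁.val L)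
    (ζA : A → ℤˣ)
    (hζA : (ZtSystem.pullback ⟨Subtype.val, continuous_subtype_val⟩ Λ₀).IsMorphism
      (ZtSystem.pullback ⟨Subtype.val, continuous_subtype_val⟩ Λ₁) ζA)
    {ι : Type*} (a : ι → A)
    (ha_cover : ∀ x : A, ∃ i, Joined x (a i))
    (ha_sep : ∀ i j, Joined (a i) (a j) → i = j)
    (sel : ι → ι)
    (hσ : ∀ i, Joined (a i : X) (a (sel i) : X))
    (hσc : ∀ i j, Joined (a i : X) (a j : X) → sel i = sel j)
    (lam : ∀ i, Path (a i : X) (a (sel i) : X))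
    (hcond : ∀ i, Λ₀.val (lam i) * Λ₁.val (lam i) = ζA (a i) * ζA (a (sel i))) :
    ∃ ζX : X → ℤˣ, Λ₀.IsMorphism Λ₁ ζX ∧ ∀ x : A, ζX x = ζA x := by
  classical
  -- well-defined basepoint for every path component of `X`
  let base : X → X := fun x =>
    if h : ∃ i, Joined x (a i : X) then (a (sel h.choose) : X)
    else (Quotient.mk (pathSetoid X) x).out
  have hbase_joined : ∀ x, Joined x (base x) := by
    intro x
    by_cases h : ∃ i, Joined x (a i : X)
    · simp only [base, dif_pos h]
      exact h.choose_spec.trans ((hσ h.choose))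
    · simp only [base, dif_neg h]
      exact (@Quotient.mk_out X (pathSetoid X) x).symm
  have hbase_const : ∀ x y : X, Joined x y → base x = base y := by
    intro x y hxy
    by_cases hx : ∃ i, Joined x (a i : X)
    · have hy : ∃ i, Joined y (a i : X) := ⟨hx.choose, hxy.symm.trans hx.choose_spec⟩
      simp only [base, dif_pos hx, dif_pos hy]
      exact congrArg (fun i => (a i : X))
        (hσc _ _ (hx.choose_spec.symm.trans (hxy.trans hy.choose_spec)))
    · have hy : ¬ ∃ i, Joined y (a i : X) := by
        rintro ⟨i, hi⟩; exact hx ⟨i, hxy.trans hi⟩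
      simp only [base, dif_neg hx, dif_neg hy]
      exact congrArg Quotient.out (Quotient.sound hxy)
  let c : X → ℤˣ := fun z => if h : z ∈ A then ζA ⟨z, h⟩ else 1
  refine ⟨fun x => ZtSystem.w Λ₀ Λ₁ (hbase_joined x).somePath * c (base x), ?_, ?_⟩
  · intro x y γ
    have hb : base x = base y := hbase_const x y ⟨γ⟩
    have hy' : Joined y (base x) := hb ▸ hbase_joined y
    have hkey : ZtSystem.w Λ₀ Λ₁ γ
        = ZtSystem.w Λ₀ Λ₁ (hbase_joined x).somePath * ZtSystem.w Λ₀ Λ₁ hy'.somePath :=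
      ZtSystem.w_key Λ₀ Λ₁ htwist γ _ _
    have hcy : ZtSystem.w Λ₀ Λ₁ (hbase_joined y).somePath = ZtSystem.w Λ₀ Λ₁ hy'.somePath :=
      ZtSystem.w_cast Λ₀ Λ₁ htwist hb.symm _ _
    show ZtSystem.w Λ₀ Λ₁ γ
        = (ZtSystem.w Λ₀ Λ₁ (hbase_joined x).somePath * c (base x))
          * (ZtSystem.w Λ₀ Λ₁ (hbase_joined y).somePath * c (base y))
    rw [hcy, ← hb, mul_mul_mul_comm, Int.units_mul_self, mul_one, hkey]
  · intro x
    obtain ⟨j, hj⟩ := ha_cover x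
    have hjX : Joined (x : X) (a j : X) := ⟨hj.somePath.map continuous_subtype_val⟩
    have hx : ∃ i, Joined (x : X) (a i : X) := ⟨j, hjX⟩
    have hbx : base (x : X) = (a (sel j) : X) := by
      simp only [base, dif_pos hx]
      exact congrArg (fun i => (a i : X)) (hσc _ _ (hx.choose_spec.symm.trans hjX))
    have hJ : Joined (x : X) (a (sel j) : X) := hjX.trans (hσ j)
    have hcast : ZtSystem.w Λ₀ Λ₁ (hbase_joined (x : X)).somePath
        = ZtSystem.w Λ₀ Λ₁ hJ.somePath := ZtSystem.w_cast Λ₀ Λ₁ htwist hbx _ _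
    have hPval : ZtSystem.w Λ₀ Λ₁ hJ.somePath
        = (ζA x * ζA (a j)) * (ζA (a j) * ζA (a (sel j))) := by
      have h1 : ZtSystem.w Λ₀ Λ₁ hJ.somePath
          = ZtSystem.w Λ₀ Λ₁ ((hj.somePath.map continuous_subtype_val).trans (lam j)) :=
        ZtSystem.w_indep Λ₀ Λ₁ htwist _ _
      rw [h1, ZtSystem.w_trans]
      have h2 : ZtSystem.w Λ₀ Λ₁ (hj.somePath.map continuous_subtype_val)
          = ζA x * ζA (a j) := hζA hj.somePath
      have h3 : ZtSystem.w Λ₀ Λ₁ (lam j) = ζA (a j) * ζA (a (sel j)) := hcond j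
      rw [h2, h3]
    have hcA : c (base (x : X)) = ζA (a (sel j)) := by
      rw [hbx]
      simp only [c, dif_pos (a (sel j)).2]
    show ZtSystem.w Λ₀ Λ₁ (hbase_joined (x : X)).somePath * c (base (x : X)) = ζA x
    rw [hcast, hPval, hcA]
    exact units_int_helper2 _ _ _
end

section
/- Let ι : A ⊆ X be a subspace inclusion, Λ₀ a ℤᵗ-system on X, Λ_A a ℤᵗ-system on A, and ζ : Λ_A → ι*(Λ₀) a morphism of ℤᵗ-systems on A. Then there exists a ℤᵗ-system Λ₁ on X such that Λ₁(ι∘λ) = Λ_A(λ) for every path λ in A, together with a morphism ζ̃ : Λ₁ → Λ₀ of ℤᵗ-systems on X satisfying ζ̃(a) = ζ(a) for all a ∈ A. -/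
open unitInterval

/-- Given `Λ₀` on `X`, `Λ_A` on `A ⊆ X` and a morphism `ζ : Λ_A → ι*(Λ₀)`,
there is a `ℤᵗ`-system `Λ₁` on `X` restricting to `Λ_A` together with a
morphism `Λ₁ → Λ₀` extending `ζ`. -/
theorem extend_system_and_morphism {X : Type*} [TopologicalSpace X] (A : Set X)
    (Λ₀ : ZtSystem X) (lamA : ZtSystem A) (ζ : A → ℤˣ)
    (hζ : lamA.IsMorphism
      (ZtSystem.pullback ⟨Subtype.val, continuous_subtype_val⟩ Λ₀) ζ) :
    ∃ Λ₁ : ZtSystem X,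
      (∀ (a₀ a₁ : A) (γ : Path a₀ a₁),
        Λ₁.val (γ.map continuous_subtype_val) = lamA.val γ) ∧
      ∃ ζt : X → ℤˣ, Λ₁.IsMorphism Λ₀ ζt ∧ ∀ a : A, ζt a = ζ a := by
  classical
  set ζt : X → ℤˣ := fun x => if h : x ∈ A then ζ ⟨x, h⟩ else 1 with hζt
  have hsq : ∀ u : ℤˣ, u * u = 1 := Int.units_mul_self
  have key : ∀ a b c d e : ℤˣ, a * b * c * e = a * c * d * (b * d * e) := by
    intro a b c d e
    rcases Int.units_eq_one_or d with hd | hd <;> rw [hd] <;>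
      simp [mul_comm, mul_left_comm, mul_assoc]
  refine ⟨{ val := fun {x y} γ => Λ₀.val γ * ζt x * ζt y,
            homotopic_eq := fun h => by beta_reduce; rw [Λ₀.homotopic_eq h],
            refl_eq := fun x => by
              beta_reduce; rw [Λ₀.refl_eq, one_mul, hsq],
            trans_eq := fun {x y z} γ δ => by
              beta_reduce
              rw [Λ₀.trans_eq]
              exact key _ _ _ _ _ }, ?_, ζt, ?_, ?_⟩
  · intro a₀ a₁ γ
    have h := hζ γ
    have ha₀ : ζt (a₀ : X) = ζ a₀ := by simp [hζt]
    have ha₁ : ζt (a₁ : X) = ζ a₁ := by simp [hζt]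
    show Λ₀.val (γ.map continuous_subtype_val) * ζt (a₀ : X) * ζt (a₁ : X) = lamA.val γ
    rw [ha₀, ha₁]
    have hp : (ZtSystem.pullback ⟨Subtype.val, continuous_subtype_val⟩ Λ₀).val γ
        = Λ₀.val (γ.map continuous_subtype_val) := rfl
    rw [hp] at h
    have h2 : Λ₀.val (γ.map continuous_subtype_val) = lamA.val γ * (ζ a₀ * ζ a₁) := by
      rw [← h, ← mul_assoc, hsq, one_mul]
    rw [h2]
    rcases Int.units_eq_one_or (ζ a₀) with h0 | h0 <;>
      rcases Int.units_eq_one_or (ζ a₁) with h1 | h1 <;> rw [h0, h1] <;>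
      simp [mul_comm, mul_left_comm, mul_assoc]
  · intro x y γ
    show Λ₀.val γ * ζt x * ζt y * Λ₀.val γ = ζt x * ζt y
    rw [mul_comm, ← mul_assoc, ← mul_assoc, hsq, one_mul]
  · intro a
    simp [hζt]
end

section
/- Let X, Y be topological spaces, Λ_X a ℤᵗ-system on X, Λ_Y a ℤᵗ-system on Y, F : X×[0,1] → Y continuous, and ι₀ : X → X×[0,1] the inclusion x ↦ (x,0). Given any morphism ζ₀ : Λ_X → (F∘ι₀)*(Λ_Y), the function ζ_F(x,t) := ζ₀(x)·Λ_Y(F∘γ_{x,t}), where γ_{x,t} is the path s ↦ (x, s·t) in X×[0,1] from (x,0) to (x,t), is a morphism (Λ_X • θ_{[0,1]}) → F*(Λ_Y) satisfying ζ_F(x,0) = ζ₀(x) for all x ∈ X. (Existence of the homotopy-covering morphism, so Zᵗ(Top) has homotopies.) -/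
open unitInterval

/-- The `ℤᵗ`-system `Λ • θ_{[0,1]}` on `X × [0,1]`. -/
def ZtSystem.prodI {X : Type*} [TopologicalSpace X] (Λ : ZtSystem X) :
    ZtSystem (X × I) :=
  ZtSystem.pullback ⟨Prod.fst, continuous_fst⟩ Λ

/-- The path `s ↦ (x, s·t)` in `X × [0,1]` from `(x,0)` to `(x,t)`. -/
def Path.seg {X : Type*} [TopologicalSpace X] (x : X) (t : I) :
    Path ((x, 0) : X × I) (x, t) where
  toFun s := (x, ⟨s.1 * t.1, unitInterval.mul_mem s.2 t.2⟩)
  continuous_toFun := by fun_prop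
  source' := by
    refine Prod.ext rfl (Subtype.ext ?_)
    simp
  target' := by
    refine Prod.ext rfl (Subtype.ext ?_)
    simp

/-- The vertical path `t ↦ (x, t)` in `X × [0,1]` from `(x,0)` to `(x,1)`. -/
def Path.vert {X : Type*} [TopologicalSpace X] (x : X) :
    Path ((x, 0) : X × I) (x, 1) where
  toFun t := (x, t)
  continuous_toFun := by fun_prop
  source' := rfl
  target' := rfl




private lemma zt_alg (d a g b c u v : ℤˣ) (h1 : a * g = b * c) (h2 : d * b = u * v) :
    d * g = u * a * (v * c) := by
  rcases Int.units_eq_one_or d with rfl | rfl <;>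
    rcases Int.units_eq_one_or a with rfl | rfl <;>
      rcases Int.units_eq_one_or g with rfl | rfl <;>
        rcases Int.units_eq_one_or b with rfl | rfl <;>
          rcases Int.units_eq_one_or c with rfl | rfl <;>
            rcases Int.units_eq_one_or u with rfl | rfl <;>
              rcases Int.units_eq_one_or v with rfl | rfl <;>
                revert h1 h2 <;> decide

private lemma contractibleI : ContractibleSpace I :=
  (convex_Icc (0:ℝ) 1).contractibleSpace (Set.nonempty_Icc.2 zero_le_one)

/-- Existence of the homotopy-covering morphism: given a morphism
`ζ₀ : Λ_X → (F∘ι₀)*(Λ_Y)`, the function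
`ζ_F(x,t) = ζ₀(x)·Λ_Y(F∘γ_{x,t})` is a morphism
`(Λ_X • θ_{[0,1]}) → F*(Λ_Y)` restricting to `ζ₀` at `t = 0`. -/
theorem homotopy_morphism_exists {X Y : Type*} [TopologicalSpace X]
    [TopologicalSpace Y] (lamX : ZtSystem X) (lamY : ZtSystem Y)
    (F : C(X × I, Y)) (ζ₀ : X → ℤˣ)
    (h₀ : lamX.IsMorphism
      (ZtSystem.pullback (F.comp ⟨fun x => (x, 0), by fun_prop⟩) lamY) ζ₀) :
    lamX.prodI.IsMorphism (ZtSystem.pullback F lamY)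
      (fun p => ζ₀ p.1 * lamY.val ((Path.seg p.1 p.2).map F.continuous)) ∧
    ∀ x : X, ζ₀ x * lamY.val ((Path.seg x 0).map F.continuous) = ζ₀ x := by
  haveI : ContractibleSpace I := contractibleI
  constructor
  · intro p q γ
    obtain ⟨x, t⟩ := p
    obtain ⟨x', t'⟩ := q
    have hι : Continuous (fun x : X => ((x, 0) : X × I)) := by fun_prop
    set δ : Path x x' := γ.map continuous_fst with hδ
    -- the two composite paths from (x,0) to (x',t')
    set A : Path ((x,0) : X × I) (x', t') := (Path.seg x t).trans γ with hA
    set B : Path ((x,0) : X × I) (x', t') := (δ.map hι).trans (Path.seg x' t') with hB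
    have hAB : Path.Homotopic A B := by
      have hfst : Path.Homotopic (A.map continuous_fst) (B.map continuous_fst) := by
        have e1 : A.map continuous_fst = (Path.refl x).trans δ := by
          rw [hA, Path.map_trans]
          exact congrArg₂ Path.trans (Path.ext rfl) (Path.ext rfl)
        have e2 : B.map continuous_fst = δ.trans (Path.refl x') := by
          rw [hB, Path.map_trans]
          exact congrArg₂ Path.trans (Path.ext rfl) (Path.ext rfl)
        rw [e1, e2]
        exact (Path.Homotopic.trans ⟨Path.Homotopy.reflTrans δ⟩
          ((Path.Homotopic.trans ⟨Path.Homotopy.transRefl δ⟩ (Path.Homotopic.refl _)).symm))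
      have hsnd : Path.Homotopic (A.map continuous_snd) (B.map continuous_snd) :=
        SimplyConnectedSpace.paths_homotopic _ _
      have eA : A = (A.map continuous_fst).prod (A.map continuous_snd) := Path.ext rfl
      have eB : B = (B.map continuous_fst).prod (B.map continuous_snd) := Path.ext rfl
      rw [eA, eB]
      exact Nonempty.map2 Path.Homotopic.prodHomotopy hfst hsnd
    have hval : lamY.val (A.map F.continuous) = lamY.val (B.map F.continuous) :=
      lamY.homotopic_eq (hAB.map F)
    rw [hA, hB, Path.map_trans, Path.map_trans, lamY.trans_eq, lamY.trans_eq] at hval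
    have hδ₀ : (δ.map hι).map F.continuous
        = δ.map (F.comp ⟨fun x => (x, 0), by fun_prop⟩).continuous := Path.ext rfl
    have h2 := h₀ δ
    show lamX.val δ * lamY.val (γ.map F.continuous)
      = ζ₀ x * lamY.val ((Path.seg x t).map F.continuous)
        * (ζ₀ x' * lamY.val ((Path.seg x' t').map F.continuous))
    refine zt_alg _ _ _ _ _ _ _ hval ?_
    rw [hδ₀]
    exact h2
  · intro x
    have : (Path.seg x 0).map F.continuous = Path.refl (F (x, 0)) := by
      refine Path.ext (funext fun s => ?_)
      show F (x, ⟨s.1 * (0:I).1, _⟩) = F (x, 0)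
      congr 1
      exact Prod.ext rfl (Subtype.ext (mul_zero _))
    rw [this, lamY.refl_eq, mul_one]
end

section
/- Let X be a path-connected topological space, Y a topological space, Λ_X, Λ_Y ℤᵗ-systems on X and Y, F : X×[0,1] → Y continuous with f_t = F∘ι_t for t ∈ {0,1}, ζ_F : (Λ_X • θ_{[0,1]}) → F*(Λ_Y) a morphism with ζ₀(x) := ζ_F(x,0), ζ'(x) := ζ_F(x,1), ζ₁ : Λ_X → f₁*(Λ_Y) any morphism, and c_F(x) := ζ₁(x)·ζ'(x). Suppose there is a point x ∈ X with f₀(x) = f₁(x), so that L := F∘γ_x is a loop in Y, where γ_x is the path t ↦ (x,t). Then c_F is the constant function with value Λ_Y(L)·ζ₀(x)·ζ₁(x); in particular the value Λ_Y(L) depends only on the homotopy class of the loop L. -/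
open unitInterval

/-- If `X` is path connected and `f₀(x) = f₁(x)` for some `x`, so that
`L = F∘γ_x` is a loop, then `c_F` is constant with value
`Λ_Y(L)·ζ₀(x)·ζ₁(x)`. -/
theorem cF_constant {X Y : Type*} [TopologicalSpace X] [TopologicalSpace Y]
    [PathConnectedSpace X]
    (lamX : ZtSystem X) (lamY : ZtSystem Y) (F : C(X × I, Y))
    (ζF : X × I → ℤˣ)
    (hζF : lamX.prodI.IsMorphism (ZtSystem.pullback F lamY) ζF)
    (ζ₁ : X → ℤˣ)
    (hζ₁ : lamX.IsMorphism
      (ZtSystem.pullback (F.comp ⟨fun x => (x, 1), by fun_prop⟩) lamY) ζ₁)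
    (x : X) (hx : F (x, 0) = F (x, 1)) :
    ∀ y : X, ζ₁ y * ζF (y, 1) =
      lamY.val ((Path.vert x).map F.continuous) * ζF (x, 0) * ζ₁ x := by
  intro y
  obtain γ : Path x y := (PathConnectedSpace.joined x y).somePath
  -- vertical path equation
  have hvert := hζF (Path.vert x)
  have hv1 : lamX.prodI.val (Path.vert x) = 1 := by
    show lamX.val ((Path.vert x).map continuous_fst) = 1
    rw [show (Path.vert x).map continuous_fst = Path.refl x from Path.ext rfl]
    exact lamX.refl_eq x
  rw [hv1, one_mul] at hvert
  have hvert' : lamY.val ((Path.vert x).map F.continuous) = ζF (x, 0) * ζF (x, 1) := hvert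
  -- horizontal path at level 1
  have hcont : Continuous (fun z : X => ((z, 1) : X × I)) := by fun_prop
  have hhor := hζF (γ.map hcont)
  have hh1 : lamX.prodI.val (γ.map hcont) = lamX.val γ := by
    show lamX.val ((γ.map hcont).map continuous_fst) = lamX.val γ
    exact congrArg lamX.val (Path.ext rfl)
  rw [hh1] at hhor
  have hζ1 := hζ₁ γ
  have hmap : (ZtSystem.pullback (F.comp ⟨fun z => (z, 1), by fun_prop⟩) lamY).val γ
      = (ZtSystem.pullback F lamY).val (γ.map hcont) := by
    show lamY.val _ = lamY.val _
    exact congrArg lamY.val (Path.ext rfl)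
  rw [hmap, hhor] at hζ1
  -- now pure algebra in ℤˣ
  rw [hvert']
  rcases Int.units_eq_one_or (ζ₁ x) with h1 | h1 <;>
    rcases Int.units_eq_one_or (ζ₁ y) with h2 | h2 <;>
    rcases Int.units_eq_one_or (ζF (x, 0)) with h3 | h3 <;>
    rcases Int.units_eq_one_or (ζF (x, 1)) with h4 | h4 <;>
    rcases Int.units_eq_one_or (ζF (y, 1)) with h5 | h5 <;>
    simp_all
end

section
/- Let Ω be a homotopy functor from the category Zᵗ(Top) to a category D. Let (X,Λ_X) and (Y,Λ_Y) be objects, F : X×[0,1] → Y continuous with f_t = F∘ι_t for t ∈ {0,1}, and let ζ_F : (Λ_X • θ_{[0,1]}) → F*(Λ_Y) be a morphism; set ζ₀(x) := ζ_F(x,0) and ζ'(x) := ζ_F(x,1), and let ζ₁ : Λ_X → f₁*(Λ_Y) be any morphism. Define c_F : X → {1,-1} by c_F(x) := ζ₁(x)·ζ'(x) (a function constant on path components). Then Ω(f₀,ζ₀) = Ω(f₁,ζ₁) ∘ Ω(1_X, c_F·1_{Λ_X}), where (1_X, c_F·1_{Λ_X}) is the endomorphism of (X,Λ_X) given by the identity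 map of X together with the morphism x ↦ c_F(x). -/
open unitInterval CategoryTheory

/-- An object of the category `Zᵗ(Top)`: a space together with a `ℤᵗ`-system. -/
structure ZtTop where
  carrier : Type*
  [inst : TopologicalSpace carrier]
  lam : ZtSystem carrier

attribute [instance] ZtTop.inst

/-- A morphism in `Zᵗ(Top)`. -/
@[ext]
structure ZtHom (A B : ZtTop) where
  f : C(A.carrier, B.carrier)
  ζ : A.carrier → ℤˣ
  isMor : ZtSystem.IsMorphism A.lam (ZtSystem.pullback f B.lam) ζ

instance : Category ZtTop where
  Hom := ZtHom
  id A := { f := ContinuousMap.id _, ζ := fun _ => 1,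
            isMor := by
              intro x y γ
              show A.lam.val γ * A.lam.val (γ.map continuous_id) = 1 * 1
              rw [Path.map_id, Int.units_mul_self, one_mul] }
  comp {A B C} u v :=
    { f := v.f.comp u.f
      ζ := fun x => v.ζ (u.f x) * u.ζ x
      isMor := by
        intro x y γ
        have h1 : A.lam.val γ * B.lam.val (γ.map u.f.continuous) = u.ζ x * u.ζ y := u.isMor γ
        have h2 : B.lam.val (γ.map u.f.continuous) *
            C.lam.val ((γ.map u.f.continuous).map v.f.continuous) =
            v.ζ (u.f x) * v.ζ (u.f y) := v.isMor (γ.map u.f.continuous)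
        show A.lam.val γ * C.lam.val (γ.map (v.f.comp u.f).continuous) = _
        have hmap : γ.map (v.f.comp u.f).continuous
            = (γ.map u.f.continuous).map v.f.continuous := by rw [Path.map_map]
        rw [hmap]
        have hb : B.lam.val (γ.map u.f.continuous) * B.lam.val (γ.map u.f.continuous) = 1 :=
          Int.units_mul_self _
        calc A.lam.val γ * C.lam.val ((γ.map u.f.continuous).map v.f.continuous)
            = (A.lam.val γ * B.lam.val (γ.map u.f.continuous)) *
              (B.lam.val (γ.map u.f.continuous) *
                C.lam.val ((γ.map u.f.continuous).map v.f.continuous)) := by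
              rw [mul_assoc (A.lam.val γ), ← mul_assoc (B.lam.val (γ.map u.f.continuous))
                (B.lam.val (γ.map u.f.continuous)), hb, one_mul]
          _ = (u.ζ x * u.ζ y) * (v.ζ (u.f x) * v.ζ (u.f y)) := by rw [h1, h2]
          _ = v.ζ (u.f x) * u.ζ x * (v.ζ (u.f y) * u.ζ y) := by
              rw [mul_mul_mul_comm, mul_comm (u.ζ x), mul_comm (u.ζ y)] }
  id_comp u := ZtHom.ext (ContinuousMap.comp_id _) (funext fun x => mul_one _)
  comp_id u := ZtHom.ext (ContinuousMap.id_comp _) (funext fun x => one_mul _)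
  assoc u v w := ZtHom.ext rfl (funext fun x => (mul_assoc _ _ _).symm)

/-- The object `(X × [0,1], Λ • θ_{[0,1]})` of `Zᵗ(Top)`. -/
def ZtTop.prodI (A : ZtTop) : ZtTop :=
  { carrier := A.carrier × I, lam := A.lam.prodI }

/-- The end inclusion `(ι_t, 1_Λ) : (X,Λ) → (X × [0,1], Λ • θ_{[0,1]})`. -/
def ZtTop.iota (A : ZtTop) (t : I) : A ⟶ A.prodI where
  f := ⟨fun x => (x, t), by fun_prop⟩
  ζ := fun _ => 1
  isMor := by
    intro x y γ
    show A.lam.val γ * A.lam.prodI.val (γ.map _) = 1 * 1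
    have : A.lam.prodI.val (γ.map (Continuous.prodMk (f := fun x : A.carrier => x)
        (g := fun _ : A.carrier => t) continuous_id continuous_const)) = A.lam.val γ := by
      show A.lam.val ((γ.map _).map _) = _
      rw [Path.map_map]
      congr 1
    rw [this, Int.units_mul_self, one_mul]

/-- The projection `(r, 1) : (X × [0,1], Λ • θ_{[0,1]}) → (X,Λ)`. -/
def ZtTop.proj (A : ZtTop) : A.prodI ⟶ A where
  f := ⟨Prod.fst, continuous_fst⟩
  ζ := fun _ => 1
  isMor := by
    intro p q μ
    show A.lam.prodI.val μ * A.lam.val (μ.map continuous_fst) = 1 * 1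
    show A.lam.val (μ.map continuous_fst) * A.lam.val (μ.map continuous_fst) = 1 * 1
    rw [Int.units_mul_self, one_mul]

/-- A homotopy functor on `Zᵗ(Top)`. -/
def IsHomotopyFunctor {D : Type*} [Category D] (Ω : Functor ZtTop D) : Prop :=
  ∀ A : ZtTop, Ω.map (A.proj) ≫ Ω.map (A.iota 0) = 𝟙 (Ω.obj A.prodI)

/-- The endomorphism `(1_X, -1_Λ)` of `(X, Λ)`. -/
def ZtTop.negId (A : ZtTop) : A ⟶ A where
  f := ContinuousMap.id _
  ζ := fun _ => -1
  isMor := by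
    intro x y γ
    show A.lam.val γ * A.lam.val (γ.map continuous_id) = (-1 : ℤˣ) * (-1 : ℤˣ)
    rw [Path.map_id, Int.units_mul_self, neg_mul_neg, one_mul]

/-- The involution on `Zᵗ(Top)`: `(f, ζ) ↦ (f, -ζ)`. -/
def ZtHom.neg {A B : ZtTop} (u : A ⟶ B) : A ⟶ B where
  f := u.f
  ζ := fun x => -(u.ζ x)
  isMor := by
    intro x y γ
    rw [neg_mul_neg]
    exact u.isMor γ

/-! Both `ι₀` and `ι₁` are sections of the projection `r`, and for a homotopy functor `Ω(ι₀)` is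
also a one-sided inverse of `Ω(r)` on the other side; so `Ω(r)` is invertible and
`Ω(ι₀) = Ω(r)⁻¹ = Ω(ι₁)`, whence `Ω(F ∘ ι₀, ζ₀) = Ω(F ∘ ι₁, ζ')`. The sign `c_F = ζ₁ · ζ'` is
chosen so that `(f₁, ζ₁) ∘ (1_X, c_F) = (F ∘ ι₁, ζ')`, because `ζ₁(x)² = 1`. -/

@[simp]
lemma ZtHom.comp_f {A B C : ZtTop} (u : A ⟶ B) (v : B ⟶ C) : (u ≫ v).f = v.f.comp u.f :=
  rfl

@[simp]
lemma ZtHom.comp_ζ {A B C : ZtTop} (u : A ⟶ B) (v : B ⟶ C) (x : A.carrier) :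
    (u ≫ v).ζ x = v.ζ (u.f x) * u.ζ x :=
  rfl

lemma ZtHom.comp_eq_of_ζ_eq_mul {A B : ZtTop} (c : A ⟶ A) (u v : A ⟶ B)
    (hcf : c.f = ContinuousMap.id A.carrier) (huv : u.f = v.f)
    (hcζ : ∀ x, c.ζ x = u.ζ x * v.ζ x) :
    c ≫ u = v := by
  refine ZtHom.ext (by rw [ZtHom.comp_f, hcf, ContinuousMap.comp_id, huv]) (funext fun x => ?_)
  rw [ZtHom.comp_ζ, hcf, ContinuousMap.id_apply, hcζ, ← mul_assoc, Int.units_mul_self, one_mul]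

lemma ZtTop.iota_comp_proj (A : ZtTop) (t : I) : A.iota t ≫ A.proj = 𝟙 A :=
  ZtHom.ext rfl (funext fun _ => one_mul 1)

lemma IsHomotopyFunctor.map_iota_eq_map_iota_zero {D : Type*} [Category D]
    {Ω : Functor ZtTop D} (hΩ : IsHomotopyFunctor Ω) (A : ZtTop) (t : I) :
    Ω.map (A.iota t) = Ω.map (A.iota 0) := by
  rw [← Category.comp_id (Ω.map (A.iota t)), ← hΩ A, ← Category.assoc, ← Ω.map_comp,
    A.iota_comp_proj, Ω.map_id, Category.id_comp]

lemma IsHomotopyFunctor.map_iota_eq {D : Type*} [Category D] {Ω : Functor ZtTop D}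
    (hΩ : IsHomotopyFunctor Ω) (A : ZtTop) (s t : I) :
    Ω.map (A.iota s) = Ω.map (A.iota t) := by
  rw [hΩ.map_iota_eq_map_iota_zero A s, hΩ.map_iota_eq_map_iota_zero A t]

open CategoryTheory in
/-- For a homotopy functor `Ω` on `Zᵗ(Top)`: if `(f₀,ζ₀) = (F,ζ_F)∘(ι₀,1)`,
`ζ₁` is any morphism with underlying map `f₁ = F∘ι₁`, and
`c_F(x) = ζ₁(x)·ζ_F(x,1)`, then `Ω(f₀,ζ₀) = Ω(f₁,ζ₁) ∘ Ω(1_X, c_F·1)`. -/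
theorem homotopy_functor_comparison {D : Type*} [Category D]
    (Ω : Functor ZtTop D) (hΩ : IsHomotopyFunctor Ω)
    (A B : ZtTop) (mF : A.prodI ⟶ B) (m₁ : A ⟶ B) (mc : A ⟶ A)
    (hm₁f : ZtHom.f m₁ = ZtHom.f (A.iota 1 ≫ mF))
    (hmcf : ZtHom.f mc = ContinuousMap.id A.carrier)
    (hmcζ : ∀ x : A.carrier, ZtHom.ζ mc x = ZtHom.ζ m₁ x * ZtHom.ζ (A.iota 1 ≫ mF) x) :
    Ω.map (A.iota 0 ≫ mF) = Ω.map mc ≫ Ω.map m₁ := by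
  calc Ω.map (A.iota 0 ≫ mF) = Ω.map (A.iota 1 ≫ mF) := by
        rw [Ω.map_comp, Ω.map_comp, hΩ.map_iota_eq A 0 1]
    _ = Ω.map mc ≫ Ω.map m₁ := by
        rw [← Ω.map_comp, ZtHom.comp_eq_of_ζ_eq_mul mc m₁ _ hmcf hm₁f hmcζ]
end
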